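/- arXiv:1204.1991 — 4 statements merged into one kernel-verified Lean document; each statement's English description precedes it below -/
import Mathlib

section
/- Let φ : ℝ^n → ℝ be a convex function, Γ ⊆ ℤ^n a subgroup, and suppose φ(m + γ) = φ(m) + α_γ(m) for all γ ∈ Γ, with α_γ affine-linear with integral slope dα_γ ∈ Hom(ℤ^n, ℤ) and constant term c_γ ∈ ℤ. Define the cone C(Δ_φ) = { (x, r, ℓ) ∈ ℝ^n × ℝ × ℝ : ℓ > 0, r ≥ ℓ·φ(x/ℓ) } ∪ ({0} × ℝ_{≥0} × {0}). Then for each γ ∈ Γ the linear map ψ_γ(x, r, ℓ) = (x + ℓγ, ⟨dα_γ, x⟩ + ℓ c_γ + r, ℓ) maps C(Δ_φ) bijectively onto itself. -/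
/-!
`ψ_γ` is the homogenisation `(x, r, ℓ) ↦ (x + ℓγ, r + ℓ α_γ(x/ℓ), ℓ)` of the affine map
`(m, r) ↦ (m + γ, r + α_γ(m))`, which maps `Δ_φ` into itself by quasi-periodicity of `φ`.
Such shears compose like the affine maps they homogenise, so `ψ_γ` is inverted by the shear for
`-γ`, under which `φ` is quasi-periodic too; hence both map the cone into itself.
-/

open Finset

/-- The cone over the graph-polyhedron `Δ_φ = {(m,r) : r ≥ φ(m)}`:
`C(Δ_φ) = {(x,r,ℓ) : ℓ > 0, r ≥ ℓφ(x/ℓ)} ∪ ({0} × ℝ_{≥0} × {0})`. -/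
def coneOverGraph {n : ℕ} (φ : (Fin n → ℝ) → ℝ) : Set ((Fin n → ℝ) × ℝ × ℝ) :=
  {p | 0 < p.2.2 ∧ p.2.2 * φ (p.2.2⁻¹ • p.1) ≤ p.2.1} ∪
  {p | p.1 = 0 ∧ 0 ≤ p.2.1 ∧ p.2.2 = 0}

section ConeShear

variable {E : Type*} [AddCommGroup E] [Module ℝ E]

def coneShear (g : E) (L : E →ₗ[ℝ] ℝ) (C : ℝ) (p : E × ℝ × ℝ) : E × ℝ × ℝ :=
  (p.1 + p.2.2 • g, L p.1 + p.2.2 * C + p.2.1, p.2.2)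

theorem coneShear_zero (p : E × ℝ × ℝ) : coneShear 0 0 0 p = p := by
  simp [coneShear]

theorem coneShear_coneShear (g g' : E) (L L' : E →ₗ[ℝ] ℝ) (C C' : ℝ) (p : E × ℝ × ℝ) :
    coneShear g' L' C' (coneShear g L C p) = coneShear (g + g') (L + L') (C + C' + L' g) p := by
  obtain ⟨x, r, ℓ⟩ := p
  simp only [coneShear, smul_add, map_add, map_smul, smul_eq_mul, LinearMap.add_apply,
    Prod.mk.injEq, and_true]
  constructor
  · abel
  · ring

theorem coneShear_leftInverse (g : E) (L : E →ₗ[ℝ] ℝ) (C : ℝ) :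
    Function.LeftInverse (coneShear (-g) (-L) (L g - C)) (coneShear g L C) := fun p => by
  rw [coneShear_coneShear, add_neg_cancel, add_neg_cancel, LinearMap.neg_apply]
  convert coneShear_zero p using 2
  ring

theorem coneShear_rightInverse (g : E) (L : E →ₗ[ℝ] ℝ) (C : ℝ) :
    Function.RightInverse (coneShear (-g) (-L) (L g - C)) (coneShear g L C) := fun p => by
  rw [coneShear_coneShear, neg_add_cancel, neg_add_cancel, map_neg]
  convert coneShear_zero p using 2
  ring

end ConeShear

section QuasiPeriodic

variable {n : ℕ} {φ : (Fin n → ℝ) → ℝ} {g : Fin n → ℝ} {L : (Fin n → ℝ) →ₗ[ℝ] ℝ} {C : ℝ}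

theorem apply_add_neg_eq_of_apply_add_eq (hper : ∀ x, φ (x + g) = φ x + L x + C)
    (x : Fin n → ℝ) :
    φ (x + -g) = φ x + (-L) x + (L g - C) := by
  have h := hper (x + -g)
  rw [neg_add_cancel_right, map_add, map_neg] at h
  rw [LinearMap.neg_apply]
  linarith

theorem coneShear_mapsTo (hper : ∀ x, φ (x + g) = φ x + L x + C) :
    Set.MapsTo (coneShear g L C) (coneOverGraph φ) (coneOverGraph φ) := by
  rintro ⟨x, r, ℓ⟩ (⟨hℓ, hr⟩ | ⟨rfl, hr, rfl⟩)
  · refine Or.inl ⟨hℓ, ?_⟩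
    have hdehom : ℓ⁻¹ • (x + ℓ • g) = ℓ⁻¹ • x + g := by
      rw [smul_add, smul_smul, inv_mul_cancel₀ hℓ.ne', one_smul]
    have hL : ℓ * L (ℓ⁻¹ • x) = L x := by
      rw [map_smul, smul_eq_mul, mul_inv_cancel_left₀ hℓ.ne']
    simp only [coneShear, hdehom, hper, mul_add, hL] at hr ⊢
    linarith
  · exact Or.inr (by simp [coneShear, hr])

theorem coneShear_bijOn (hper : ∀ x, φ (x + g) = φ x + L x + C) :
    Set.BijOn (coneShear g L C) (coneOverGraph φ) (coneOverGraph φ) :=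
  Set.InvOn.bijOn
    ⟨fun p _ => coneShear_leftInverse g L C p, fun p _ => coneShear_rightInverse g L C p⟩
    (coneShear_mapsTo hper) (coneShear_mapsTo (apply_add_neg_eq_of_apply_add_eq hper))

end QuasiPeriodic

theorem stmt1_general {n : ℕ} (Γ : AddSubgroup (Fin n → ℤ)) (φ : (Fin n → ℝ) → ℝ)
    (d : (Fin n → ℤ) → (Fin n → ℤ)) (c : (Fin n → ℤ) → ℤ)
    (hper : ∀ γ ∈ Γ, ∀ x : Fin n → ℝ,
      φ (x + fun i => (γ i : ℝ)) = φ x + (∑ i, (d γ i : ℝ) * x i) + (c γ : ℝ))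
    (γ : Fin n → ℤ) (hγ : γ ∈ Γ) :
    Set.BijOn
      (fun p : (Fin n → ℝ) × ℝ × ℝ =>
        ((p.1 + p.2.2 • fun i => (γ i : ℝ)),
          (∑ i, (d γ i : ℝ) * p.1 i) + p.2.2 * (c γ : ℝ) + p.2.1, p.2.2))
      (coneOverGraph φ) (coneOverGraph φ) :=
  coneShear_bijOn (L := dotProductBilin ℝ ℝ fun i => (d γ i : ℝ)) (hper γ hγ)

theorem stmt1 {n : ℕ} (Γ : AddSubgroup (Fin n → ℤ)) (φ : (Fin n → ℝ) → ℝ)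
    (hconv : ConvexOn ℝ Set.univ φ)
    (d : (Fin n → ℤ) → (Fin n → ℤ)) (c : (Fin n → ℤ) → ℤ)
    (hper : ∀ γ ∈ Γ, ∀ x : Fin n → ℝ,
      φ (x + fun i => (γ i : ℝ)) = φ x + (∑ i, (d γ i : ℝ) * x i) + (c γ : ℝ))
    (γ : Fin n → ℤ) (hγ : γ ∈ Γ) :
    Set.BijOn
      (fun p : (Fin n → ℝ) × ℝ × ℝ =>
        ((p.1 + p.2.2 • fun i => (γ i : ℝ)),
          (∑ i, (d γ i : ℝ) * p.1 i) + p.2.2 * (c γ : ℝ) + p.2.1, p.2.2))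
      (coneOverGraph φ) (coneOverGraph φ) :=
  stmt1_general Γ φ d c hper γ hγ
end

section
/- Let φ : ℝ → ℝ be a convex function and suppose there exist d > 0, a > 0 and b ∈ ℝ with φ(x + d) = φ(x) + a·x + b for all x ∈ ℝ. Then for every affine function L(x) = p·x + q, one has φ(x) − L(x) → ∞ as |x| → ∞. -/
/-!
The secant slope of `φ` over `[x, x + d]` is `(a * x + b) / d`, which is unbounded above and
below. For a convex function, the secant line over `[x, y]` lies below the graph outside
`(x, y)`; so a secant of slope larger (smaller) than `p` bounds `φ x - p * x` from below by a
function tending to `+∞` as `x → +∞` (`x → -∞`).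
-/

open Filter

namespace ConvexOn

variable {f : ℝ → ℝ} {x y t : ℝ}

lemma add_slope_mul_le_of_right_le (hf : ConvexOn ℝ Set.univ f) (hxy : x < y) (hyt : y ≤ t) :
    f y + (f y - f x) / (y - x) * (t - y) ≤ f t := by
  rcases hyt.eq_or_lt with rfl | hyt
  · simp
  have h := hf.slope_mono_adjacent (Set.mem_univ x) (Set.mem_univ t) hxy hyt
  rw [le_div_iff₀ (sub_pos.2 hyt)] at h
  linarith

lemma add_slope_mul_le_of_le_left (hf : ConvexOn ℝ Set.univ f) (hxy : x < y) (htx : t ≤ x) :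
    f x + (f y - f x) / (y - x) * (t - x) ≤ f t := by
  rcases htx.eq_or_lt with rfl | htx
  · simp
  have h := hf.slope_mono_adjacent (Set.mem_univ t) (Set.mem_univ y) htx hxy
  rw [div_le_iff₀ (sub_pos.2 htx)] at h
  linarith

lemma tendsto_sub_mul_atTop_of_lt_slope (hf : ConvexOn ℝ Set.univ f) {p : ℝ} (hxy : x < y)
    (hp : p < (f y - f x) / (y - x)) : Tendsto (fun t => f t - p * t) atTop atTop := by
  set s := (f y - f x) / (y - x)
  have hlin : Tendsto (fun t => (s - p) * t + (f y - s * y)) atTop atTop :=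
    tendsto_atTop_add_const_right _ _ (tendsto_id.const_mul_atTop (sub_pos.2 hp))
  refine tendsto_atTop_mono' _ ?_ hlin
  filter_upwards [eventually_ge_atTop y] with t hyt
  linarith [hf.add_slope_mul_le_of_right_le hxy hyt]

lemma tendsto_sub_mul_atBot_of_slope_lt (hf : ConvexOn ℝ Set.univ f) {p : ℝ} (hxy : x < y)
    (hp : (f y - f x) / (y - x) < p) : Tendsto (fun t => f t - p * t) atBot atTop := by
  set s := (f y - f x) / (y - x)
  have hlin : Tendsto (fun t => (s - p) * t + (f x - s * x)) atBot atTop :=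
    tendsto_atTop_add_const_right _ _ (tendsto_id.const_mul_atBot_of_neg (sub_neg.2 hp))
  refine tendsto_atTop_mono' _ ?_ hlin
  filter_upwards [eventually_le_atBot x] with t htx
  linarith [hf.add_slope_mul_le_of_le_left hxy htx]

lemma tendsto_sub_affine_cocompact (hf : ConvexOn ℝ Set.univ f) {p q : ℝ}
    (hright : ∃ x y, x < y ∧ p < (f y - f x) / (y - x))
    (hleft : ∃ x y, x < y ∧ (f y - f x) / (y - x) < p) :
    Tendsto (fun t => f t - (p * t + q)) (cocompact ℝ) atTop := by
  obtain ⟨x₁, y₁, hxy₁, hp₁⟩ := hright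
  obtain ⟨x₂, y₂, hxy₂, hp₂⟩ := hleft
  have hsub : (fun t => f t - (p * t + q)) = fun t => f t - p * t + -q := by
    funext t; ring
  rw [cocompact_eq_atBot_atTop, tendsto_sup, hsub]
  exact ⟨tendsto_atTop_add_const_right _ _ (hf.tendsto_sub_mul_atBot_of_slope_lt hxy₂ hp₂),
    tendsto_atTop_add_const_right _ _ (hf.tendsto_sub_mul_atTop_of_lt_slope hxy₁ hp₁)⟩

end ConvexOn

theorem stmt5 (φ : ℝ → ℝ) (hconv : ConvexOn ℝ Set.univ φ)
    (d a b : ℝ) (hd : 0 < d) (ha : 0 < a)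
    (hper : ∀ x : ℝ, φ (x + d) = φ x + a * x + b) :
    ∀ p q : ℝ,
      Filter.Tendsto (fun x => φ x - (p * x + q)) (Filter.cocompact ℝ) Filter.atTop := by
  intro p q
  have hslope (x : ℝ) : (φ (x + d) - φ x) / (x + d - x) = (a * x + b) / d := by
    rw [hper, add_sub_cancel_left]; congr 1; ring
  have hmul : a * ((d * p - b) / a) = d * p - b := mul_div_cancel₀ _ ha.ne'
  -- at `x = (d * p - b) / a ± 1` the secant slope is `p ± a / d`
  refine hconv.tendsto_sub_affine_cocompact ?_ ?_
  · refine ⟨(d * p - b) / a + 1, _, lt_add_of_pos_right _ hd, ?_⟩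
    rw [hslope, lt_div_iff₀ hd]; linarith
  · refine ⟨(d * p - b) / a - 1, _, lt_add_of_pos_right _ hd, ?_⟩
    rw [hslope, div_lt_iff₀ hd]; linarith
end

section
/- Work in the ring ℂ[[x, y]] of formal power series (all maps below are continuous ℂ-algebra automorphisms determined by their values on x and y; products like x(1+y)^{-1} and x(1+xy)^{-1} make sense since 1+y and 1+xy are units). Define automorphisms: θ₁ by θ₁(x) = x, θ₁(y) = y(1+x); θ₂ by θ₂(x) = x(1+y)^{-1}, θ₂(y) = y; θ₃ by θ₃(x) = x(1+xy)^{-1}, θ₃(y) = y(1+xy). Then θ₁ ∘ θ₂ = θ₂ ∘ θ₃ ∘ θ₁ as automorphisms of ℂ[[x,y]]. -/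
open MvPowerSeries

/-- Substitution `x ↦ a`, `y ↦ b` on `ℂ[[x,y]]`, defined coefficientwise.  For `a`, `b`
with vanishing constant term this is the continuous ℂ-algebra endomorphism of
`ℂ[[x,y]]` determined by sending `x` to `a` and `y` to `b`: the coefficient of a
monomial `e` in `f(a,b)` only involves the (finitely many) coefficients of `f` in
total degree `≤ |e|`. -/
noncomputable def substXY (a b : MvPowerSeries (Fin 2) ℂ) :
    MvPowerSeries (Fin 2) ℂ → MvPowerSeries (Fin 2) ℂ :=
  fun f => fun e =>
    ∑ p ∈ Finset.range (e 0 + e 1 + 1) ×ˢ Finset.range (e 0 + e 1 + 1),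
      MvPowerSeries.coeff (Finsupp.single 0 p.1 + Finsupp.single 1 p.2) f *
        MvPowerSeries.coeff e (a ^ p.1 * b ^ p.2)

noncomputable abbrev Xv : MvPowerSeries (Fin 2) ℂ := MvPowerSeries.X 0
noncomputable abbrev Yv : MvPowerSeries (Fin 2) ℂ := MvPowerSeries.X 1

/-- `θ₁ : x ↦ x, y ↦ y(1+x)`. -/
noncomputable def theta1 : MvPowerSeries (Fin 2) ℂ → MvPowerSeries (Fin 2) ℂ :=
  substXY Xv (Yv * (1 + Xv))

/-- `θ₂ : x ↦ x(1+y)⁻¹, y ↦ y`. -/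
noncomputable def theta2 : MvPowerSeries (Fin 2) ℂ → MvPowerSeries (Fin 2) ℂ :=
  substXY (Xv * (1 + Yv)⁻¹) Yv

/-- `θ₃ : x ↦ x(1+xy)⁻¹, y ↦ y(1+xy)`. -/
noncomputable def theta3 : MvPowerSeries (Fin 2) ℂ → MvPowerSeries (Fin 2) ℂ :=
  substXY (Xv * (1 + Xv * Yv)⁻¹) (Yv * (1 + Xv * Yv))


/-! On inputs with vanishing constant term, the coefficientwise `substXY a b` is Mathlib's
substitution `subst ![a, b]`: the monomial `a ^ i * b ^ j` has order at least `i + j`, so the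
truncation in `substXY` drops nothing. Substitutions compose by substituting into the
substituted series, so both sides of the pentagon identity are substitutions, and it remains
to compare the images of `x` and `y`. These agree because
`(1 + y) * (1 + x * (1 + y)⁻¹ * y) = 1 + y * (1 + x)`. -/

namespace MvPowerSeries

lemma coeff_pow_mul_pow_eq_zero_of_degree_lt {σ R : Type*} [CommSemiring R]
    {a b : MvPowerSeries σ R} (ha : constantCoeff a = 0) (hb : constantCoeff b = 0)
    {e : σ →₀ ℕ} {i j : ℕ} (h : e.degree < i + j) : coeff e (a ^ i * b ^ j) = 0 := by
  apply coeff_of_lt_order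
  calc (e.degree : ℕ∞) < ((i + j : ℕ) : ℕ∞) := by exact_mod_cast h
    _ ≤ (a ^ i).order + (b ^ j).order := by
      push_cast
      exact add_le_add (le_order_pow_of_constantCoeff_eq_zero i ha)
        (le_order_pow_of_constantCoeff_eq_zero j hb)
    _ ≤ (a ^ i * b ^ j).order := le_order_mul

variable {σ τ k : Type*} [Field k]

lemma map_inv_of_constantCoeff_ne_zero (φ : MvPowerSeries σ k →+* MvPowerSeries τ k)
    {u : MvPowerSeries σ k} (hu : constantCoeff u ≠ 0) : φ u⁻¹ = (φ u)⁻¹ := by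
  have h : φ u⁻¹ * φ u = 1 := by rw [← map_mul, MvPowerSeries.inv_mul_cancel u hu, map_one]
  have hc : constantCoeff (φ u) ≠ 0 := fun h0 => by simpa [h0] using congrArg constantCoeff h
  exact (MvPowerSeries.eq_inv_iff_mul_eq_one hc).2 h

lemma subst_inv {a : σ → MvPowerSeries τ k} (ha : HasSubst a) {u : MvPowerSeries σ k}
    (hu : constantCoeff u ≠ 0) : subst a u⁻¹ = (subst a u)⁻¹ := by
  simpa [coe_substAlgHom] using map_inv_of_constantCoeff_ne_zero (substAlgHom ha).toRingHom hu

lemma subst_one {a : σ → MvPowerSeries τ k} (ha : HasSubst a) :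
    subst a (1 : MvPowerSeries σ k) = 1 := by
  simpa [coe_substAlgHom] using map_one (substAlgHom ha (R := k))

lemma pentagon_identity_fst {x y : MvPowerSeries σ k} (hy : constantCoeff y = 0) :
    x * (1 + y)⁻¹ * (1 + x * (1 + y)⁻¹ * y)⁻¹ = x * (1 + y * (1 + x))⁻¹ := by
  have hw : (1 + y) * (1 + y)⁻¹ = 1 := MvPowerSeries.mul_inv_cancel _ (by simp [hy])
  rw [mul_assoc, ← MvPowerSeries.mul_inv_rev]
  congr 2
  linear_combination x * y * hw

lemma pentagon_identity_snd {x y : MvPowerSeries σ k} (hy : constantCoeff y = 0) :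
    y * (1 + x * (1 + y)⁻¹ * y) * (1 + x * (1 + y)⁻¹ * (1 + x * (1 + y)⁻¹ * y)⁻¹) =
      y * (1 + x) := by
  have hw : (1 + y) * (1 + y)⁻¹ = 1 := MvPowerSeries.mul_inv_cancel _ (by simp [hy])
  have hv : (1 + x * (1 + y)⁻¹ * y) * (1 + x * (1 + y)⁻¹ * y)⁻¹ = 1 :=
    MvPowerSeries.mul_inv_cancel _ (by simp [hy])
  linear_combination (y * x * (1 + y)⁻¹) * hv + (y * x) * hw

end MvPowerSeries

lemma Finsupp.single_zero_add_single_one_injective {M : Type*} [AddZeroClass M] :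
    Function.Injective fun p : M × M => single (0 : Fin 2) p.1 + single 1 p.2 := by
  intro p q h
  have h0 := DFunLike.congr_fun h 0
  have h1 := DFunLike.congr_fun h 1
  simp only [coe_add, Pi.add_apply, single_eq_same, ne_eq, zero_ne_one, not_false_eq_true,
    single_eq_of_ne, one_ne_zero, add_zero, zero_add] at h0 h1
  exact Prod.ext h0 h1

lemma Finsupp.single_zero_add_single_one_self {M : Type*} [AddZeroClass M] (d : Fin 2 →₀ M) :
    single 0 (d 0) + single 1 (d 1) = d := by
  ext i; fin_cases i <;> simp

lemma hasSubst_pair {τ S : Type*} [CommRing S] {a b : MvPowerSeries τ S} (ha : constantCoeff a = 0)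
    (hb : constantCoeff b = 0) : HasSubst ![a, b] :=
  hasSubst_of_constantCoeff_zero (Fin.forall_fin_two.2 ⟨ha, hb⟩)

open Finset in
theorem substXY_eq_subst {a b : MvPowerSeries (Fin 2) ℂ} (ha : constantCoeff a = 0)
    (hb : constantCoeff b = 0) : substXY a b = subst ![a, b] := by
  have prod_eq (d : Fin 2 →₀ ℕ) : d.prod (fun s n => ![a, b] s ^ n) = a ^ d 0 * b ^ d 1 := by
    rw [Finsupp.prod_fintype _ _ (by simp), Fin.prod_univ_two]; rfl
  funext f
  ext e
  set N := e 0 + e 1 + 1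
  have hdeg : e.degree = e 0 + e 1 := by rw [Finsupp.degree_eq_sum, Fin.sum_univ_two]
  rw [coeff_subst (hasSubst_pair ha hb), finsum_eq_sum_of_support_subset
      (s := (range N ×ˢ range N).image fun p => Finsupp.single 0 p.1 + Finsupp.single 1 p.2),
    sum_image Finsupp.single_zero_add_single_one_injective.injOn]
  · refine sum_congr rfl fun p _ => ?_
    simp [prod_eq]
  · intro d hd
    refine mem_image.2 ⟨(d 0, d 1), ?_, Finsupp.single_zero_add_single_one_self d⟩
    by_contra hout
    apply hd
    dsimp only
    rw [prod_eq, coeff_pow_mul_pow_eq_zero_of_degree_lt ha hb, smul_zero]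
    simp only [mem_product, mem_range, not_and_or, not_lt] at hout
    omega

/-- The pentagon identity `θ₁ ∘ θ₂ = θ₂ ∘ θ₃ ∘ θ₁` in the tropical vertex group. -/
theorem stmt11 : theta1 ∘ theta2 = theta2 ∘ theta3 ∘ theta1 := by
  have h1 : HasSubst ![Xv, Yv * (1 + Xv)] := hasSubst_pair (by simp) (by simp)
  have h2 : HasSubst ![Xv * (1 + Yv)⁻¹, Yv] := hasSubst_pair (by simp) (by simp)
  have h3 : HasSubst ![Xv * (1 + Xv * Yv)⁻¹, Yv * (1 + Xv * Yv)] :=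
    hasSubst_pair (by simp) (by simp)
  rw [theta1, theta2, theta3, substXY_eq_subst (by simp) (by simp),
    substXY_eq_subst (by simp) (by simp), substXY_eq_subst (by simp) (by simp),
    subst_comp_subst h2 h1, subst_comp_subst h1 h3,
    subst_comp_subst (by simpa only [coe_substAlgHom] using h1.comp h3) h2]
  congr 1
  funext s
  fin_cases s
  · simpa [subst_mul, subst_add, subst_X, subst_one, subst_inv, h1, h2, h3]
      using (pentagon_identity_fst (x := Xv) (y := Yv) (by simp)).symm
  · simpa [subst_mul, subst_add, subst_X, subst_one, subst_inv, h1, h2, h3]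
      using (pentagon_identity_snd (x := Xv) (y := Yv) (by simp)).symm
end

section
/- There exists a unique formal power series g(t) = Σ_{k≥1} g_k t^k ∈ t·ℚ[[t]] with the following property: in the formal power series ring ℚ[[x,y,z]], writing log(1 + x + y + z + g(xyz)) = Σ_{k≥1} ((-1)^{k+1}/k)(x+y+z+g(xyz))^k, the coefficient of the monomial (xyz)^l is zero for every l ≥ 1. Moreover g_1 = −2 and g_2 = 5. -/
open Finset

/-- The series `g(xyz) ∈ ℚ[[x,y,z]]` obtained from `g ∈ ℚ[[t]]` by substituting
`t = xyz`: its coefficient on the monomial `x^a y^b z^c` is the `a`-th coefficient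
of `g` if `a = b = c`, and `0` otherwise. -/
noncomputable def diagSubst (g : PowerSeries ℚ) : MvPowerSeries (Fin 3) ℚ :=
  fun d => if d 0 = d 1 ∧ d 1 = d 2 then PowerSeries.coeff (d 0) g else 0

/-- `g` is normalized if `g ∈ t·ℚ[[t]]` and
`log(1 + x + y + z + g(xyz)) = Σ_{k≥1} ((-1)^{k+1}/k)(x+y+z+g(xyz))^k`
has vanishing coefficient on `(xyz)^l` for all `l ≥ 1`.  Since `x+y+z+g(xyz)` has
vanishing constant term, only the terms with `k ≤ 3l` contribute to the coefficient
of `(xyz)^l`, so the logarithm may be truncated there. -/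
noncomputable def IsNormalized (g : PowerSeries ℚ) : Prop :=
  PowerSeries.constantCoeff g = 0 ∧
  ∀ l : ℕ, 1 ≤ l →
    MvPowerSeries.coeff (Finsupp.equivFunOnFinite.symm fun _ : Fin 3 => l)
      (∑ k ∈ Finset.Icc 1 (3 * l),
        ((-1 : ℚ) ^ (k + 1) / k) •
          (MvPowerSeries.X 0 + MvPowerSeries.X 1 + MvPowerSeries.X 2 +
            diagSubst g) ^ k) = 0

open scoped Nat

/-!
Write `F_l(g)` for the coefficient of `(xyz)^l` in the truncated logarithm. If `g` and `h` agree
below degree `l`, then `g(xyz) - h(xyz)` only involves monomials `(xyz)^m` with `m ≥ l`, so in the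
coefficient of `(xyz)^l` it enters linearly and only through the linear term of the logarithm:
`F_l(g) = F_l(h) + g_l - h_l`. The conditions `F_l(g) = 0` therefore form a triangular system
determining `g_l` recursively from `g_1, …, g_{l-1}`. Comparing with `h = 0` and `h = -2t` gives
`g_1 = -F_1(0) = -2` and `g_2 = -F_2(-2t) = 5`, two finite multinomial computations.
-/

namespace MvPowerSeries

variable {σ R : Type*} [CommSemiring R]

theorem coeff_mul_of_coeff_lt_eq_zero {D : MvPowerSeries σ R} {e : σ →₀ ℕ}
    (hD : ∀ d < e, coeff d D = 0) (F : MvPowerSeries σ R) :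
    coeff e (F * D) = constantCoeff F * coeff e D := by
  classical
  rw [coeff_mul, Finset.sum_eq_single (0, e)]
  · rw [coeff_zero_eq_constantCoeff_apply]
  · rintro ⟨a, d⟩ had hne
    rw [HasAntidiagonal.mem_antidiagonal] at had
    have hd : d < e := lt_of_le_of_ne (had ▸ le_add_self) fun hde => hne <| by
      subst hde; simpa using had
    rw [hD d hd, mul_zero]
  · simp

/-- `(D + B)^k - B^k` is `D` times a geometric sum in `D + B` and `B`, and since `D` vanishes
below `e`, only the constant coefficient of that sum meets `coeff e D`. -/
theorem coeff_add_pow_of_coeff_lt_eq_zero {B D : MvPowerSeries σ R} {e : σ →₀ ℕ}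
    (he : e ≠ 0) (hD : ∀ d < e, coeff d D = 0) (k : ℕ) :
    coeff e ((D + B) ^ k) = coeff e (B ^ k) + k * constantCoeff B ^ (k - 1) * coeff e D := by
  have hD0 : constantCoeff D = 0 := by
    rw [← coeff_zero_eq_constantCoeff_apply]
    exact hD 0 (pos_iff_ne_zero.mpr he)
  rw [← geom_sum₂_mul_add, map_add, coeff_mul_of_coeff_lt_eq_zero hD, RingHom.map_geom_sum₂,
    map_add, hD0, zero_add, geom_sum₂_self, add_comm]

end MvPowerSeries

namespace PowerSeries

variable {R : Type*} [Ring R] (Φ : ℕ → PowerSeries R → R)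

noncomputable def triangularSolutionCoeff : ℕ → R
  | 0 => 0
  | l + 1 => -Φ (l + 1) (mk fun j => if j < l + 1 then triangularSolutionCoeff j else 0)

theorem existsUnique_of_triangular
    (hΦ : ∀ l, 1 ≤ l → ∀ g h : PowerSeries R, constantCoeff h = 0 →
      (∀ m < l, coeff m g = coeff m h) → Φ l g = Φ l h + (coeff l g - coeff l h)) :
    ∃! g : PowerSeries R, constantCoeff g = 0 ∧ ∀ l, 1 ≤ l → Φ l g = 0 := by
  set s := triangularSolutionCoeff Φ
  have hs0 : constantCoeff (mk s) = 0 := by simp [s, triangularSolutionCoeff]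
  have hs : ∀ l, 1 ≤ l → Φ l (mk s) = 0 := by
    intro l hl
    obtain ⟨l, rfl⟩ := Nat.exists_eq_add_of_le' hl
    have hT : constantCoeff (mk fun j => if j < l + 1 then s j else 0) = 0 := by
      simp [s, triangularSolutionCoeff]
    rw [hΦ _ hl _ _ hT fun m hm => by rw [coeff_mk, coeff_mk, if_pos hm]]
    simp [s, triangularSolutionCoeff]
  refine ⟨mk s, ⟨hs0, hs⟩, fun g ⟨hg0, hg⟩ => ?_⟩
  ext l
  induction l using Nat.strong_induction_on with
  | _ l ih =>
    rcases Nat.eq_zero_or_pos l with rfl | hl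
    · rw [coeff_zero_eq_constantCoeff_apply, coeff_zero_eq_constantCoeff_apply, hg0, hs0]
    · have h := hΦ l hl g (mk s) hs0 ih
      rw [hg l hl, hs l hl, zero_add, eq_comm, sub_eq_zero] at h
      exact h

end PowerSeries

noncomputable def diagExp (l : ℕ) : Fin 3 →₀ ℕ := Finsupp.equivFunOnFinite.symm fun _ => l

@[simp] theorem diagExp_apply (l : ℕ) (i : Fin 3) : diagExp l i = l := rfl

theorem diagExp_zero : diagExp 0 = 0 := by
  ext; simp

theorem diagExp_injective : Function.Injective diagExp := fun _ _ h => by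
  simpa using DFunLike.congr_fun h 0

theorem diagExp_le_diagExp {m l : ℕ} : diagExp m ≤ diagExp l ↔ m ≤ l := by
  simp [Finsupp.le_def]

theorem diagExp_lt_diagExp {m l : ℕ} : diagExp m < diagExp l ↔ m < l := by
  simp only [lt_iff_le_not_ge, diagExp_le_diagExp]

theorem diagExp_sub (l m : ℕ) : diagExp l - diagExp m = diagExp (l - m) := by
  ext; simp

theorem nsmul_diagExp (i l : ℕ) : i • diagExp l = diagExp (i * l) := by
  ext; simp

theorem eq_diagExp_of_diag {d : Fin 3 →₀ ℕ} (hd : d 0 = d 1 ∧ d 1 = d 2) :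
    d = diagExp (d 0) := by
  ext i; fin_cases i <;> simp [hd.1, hd.2]

theorem coeff_diagSubst (g : PowerSeries ℚ) (d : Fin 3 →₀ ℕ) :
    MvPowerSeries.coeff d (diagSubst g) =
      if d 0 = d 1 ∧ d 1 = d 2 then PowerSeries.coeff (d 0) g else 0 := rfl

@[simp] theorem coeff_diagExp_diagSubst (g : PowerSeries ℚ) (l : ℕ) :
    MvPowerSeries.coeff (diagExp l) (diagSubst g) = PowerSeries.coeff l g := by
  simp [coeff_diagSubst]

theorem constantCoeff_diagSubst (g : PowerSeries ℚ) :
    MvPowerSeries.constantCoeff (diagSubst g) = PowerSeries.constantCoeff g := by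
  rw [← MvPowerSeries.coeff_zero_eq_constantCoeff_apply, ← diagExp_zero,
    coeff_diagExp_diagSubst, PowerSeries.coeff_zero_eq_constantCoeff_apply]

theorem diagSubst_sub (g h : PowerSeries ℚ) : diagSubst (g - h) = diagSubst g - diagSubst h := by
  ext d; simp only [coeff_diagSubst, map_sub]; split_ifs <;> simp

theorem coeff_diagSubst_of_lt {g : PowerSeries ℚ} {l : ℕ}
    (hg : ∀ m < l, PowerSeries.coeff m g = 0) {d : Fin 3 →₀ ℕ} (hd : d < diagExp l) :
    MvPowerSeries.coeff d (diagSubst g) = 0 := by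
  rw [coeff_diagSubst]
  split_ifs with hdiag
  · rw [eq_diagExp_of_diag hdiag, diagExp_lt_diagExp] at hd
    exact hg _ hd
  · rfl

theorem diagSubst_monomial_one (c : ℚ) :
    diagSubst (PowerSeries.monomial 1 c) = MvPowerSeries.monomial (diagExp 1) c := by
  ext d
  rw [coeff_diagSubst, MvPowerSeries.coeff_monomial]
  split_ifs with hdiag hd hd
  · simp [hd]
  · rw [eq_diagExp_of_diag hdiag, diagExp_injective.eq_iff] at hd
    simp [PowerSeries.coeff_monomial, hd]
  · exact absurd (hd ▸ by simp) hdiag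
  · rfl

noncomputable def diagLogCoeff (l : ℕ) (g : PowerSeries ℚ) : ℚ :=
  MvPowerSeries.coeff (diagExp l)
    (∑ k ∈ Icc 1 (3 * l), ((-1 : ℚ) ^ (k + 1) / k) •
      (MvPowerSeries.X 0 + MvPowerSeries.X 1 + MvPowerSeries.X 2 + diagSubst g) ^ k)

theorem diagLogCoeff_eq_add_sub {l : ℕ} (hl : 1 ≤ l) {g h : PowerSeries ℚ}
    (hh : PowerSeries.constantCoeff h = 0)
    (hgh : ∀ m < l, PowerSeries.coeff m g = PowerSeries.coeff m h) :
    diagLogCoeff l g = diagLogCoeff l h + (PowerSeries.coeff l g - PowerSeries.coeff l h) := by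
  have hsplit : MvPowerSeries.X 0 + MvPowerSeries.X 1 + MvPowerSeries.X 2 + diagSubst g =
      diagSubst (g - h) +
        (MvPowerSeries.X 0 + MvPowerSeries.X 1 + MvPowerSeries.X 2 + diagSubst h) := by
    rw [diagSubst_sub]; abel
  have hB : MvPowerSeries.constantCoeff
      (MvPowerSeries.X 0 + MvPowerSeries.X 1 + MvPowerSeries.X 2 + diagSubst h) = 0 := by
    simp [constantCoeff_diagSubst, hh]
  have hD : ∀ d < diagExp l, MvPowerSeries.coeff d (diagSubst (g - h)) = 0 :=
    fun d => coeff_diagSubst_of_lt fun m hm => by rw [map_sub, hgh m hm, sub_self]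
  have he : diagExp l ≠ 0 := by
    rw [← diagExp_zero, diagExp_injective.ne_iff]; omega
  rw [diagLogCoeff, diagLogCoeff, hsplit]
  simp only [map_sum, map_smul, smul_eq_mul,
    MvPowerSeries.coeff_add_pow_of_coeff_lt_eq_zero he hD, hB, mul_add, sum_add_distrib]
  congr 1
  rw [sum_eq_single 1]
  · simp
  · intro k hk hk1
    have : k - 1 ≠ 0 := by rw [mem_Icc] at hk; omega
    simp [this]
  · exact fun h1 => absurd (mem_Icc.mpr ⟨le_rfl, by omega⟩) h1

theorem multinomial_diagExp (j : ℕ) : (diagExp j).multinomial = (3 * j)! / (j ! ^ 3) := by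
  rw [Finsupp.multinomial_eq_of_support_subset (subset_univ _), Nat.multinomial]
  simp only [diagExp_apply, sum_const, Finset.card_univ, Fintype.card_fin, smul_eq_mul, prod_const]

theorem coeff_diagExp_sum_X_pow (j n : ℕ) :
    MvPowerSeries.coeff (diagExp j)
      ((MvPowerSeries.X 0 + MvPowerSeries.X 1 + MvPowerSeries.X 2 :
        MvPowerSeries (Fin 3) ℚ) ^ n) =
      if 3 * j = n then ((diagExp j).multinomial : ℚ) else 0 := by
  have hS :
      (MvPowerSeries.X 0 + MvPowerSeries.X 1 + MvPowerSeries.X 2 : MvPowerSeries (Fin 3) ℚ) =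
      ((∑ i, MvPolynomial.X i : MvPolynomial (Fin 3) ℚ) : MvPowerSeries (Fin 3) ℚ) := by
    simp [Fin.sum_univ_three]
  rw [hS, ← MvPolynomial.coe_pow, MvPolynomial.coeff_coe,
    MvPolynomial.coeff_sum_X_pow_of_fintype]
  simp [Finsupp.sum_fintype]

theorem diagLogCoeff_monomial_one (l : ℕ) (c : ℚ) :
    diagLogCoeff l (PowerSeries.monomial 1 c) =
      ∑ k ∈ Icc 1 (3 * l), (-1 : ℚ) ^ (k + 1) / k *
        ∑ i ∈ range (k + 1), (k.choose i : ℚ) *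
          if i ≤ l then
            c ^ i * if 3 * (l - i) = k - i then ((diagExp (l - i)).multinomial : ℚ) else 0
          else 0 := by
  rw [diagLogCoeff, diagSubst_monomial_one, add_comm]
  simp only [map_sum, map_smul, smul_eq_mul]
  refine sum_congr rfl fun k _ => congrArg _ ?_
  rw [add_pow, map_sum]
  refine sum_congr rfl fun i _ => ?_
  rw [← nsmul_eq_mul', map_nsmul, nsmul_eq_mul, MvPowerSeries.monomial_pow,
    MvPowerSeries.coeff_monomial_mul, nsmul_diagExp, mul_one]
  simp only [diagExp_le_diagExp, diagExp_sub, coeff_diagExp_sum_X_pow]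

theorem diagLogCoeff_one_zero : diagLogCoeff 1 0 = 2 := by
  rw [← map_zero (PowerSeries.monomial 1), diagLogCoeff_monomial_one]
  norm_num [sum_Icc_succ_top, sum_range_succ, multinomial_diagExp, Nat.factorial]

theorem diagLogCoeff_two_monomial : diagLogCoeff 2 (PowerSeries.monomial 1 (-2)) = -5 := by
  rw [diagLogCoeff_monomial_one]
  norm_num [sum_Icc_succ_top, sum_range_succ, multinomial_diagExp, Nat.factorial, Nat.choose]

theorem IsNormalized.coeff_eq {g : PowerSeries ℚ} (hg : IsNormalized g) {l : ℕ} (hl : 1 ≤ l)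
    {h : PowerSeries ℚ} (hh : PowerSeries.constantCoeff h = 0)
    (hgh : ∀ m < l, PowerSeries.coeff m g = PowerSeries.coeff m h) :
    PowerSeries.coeff l g = PowerSeries.coeff l h - diagLogCoeff l h := by
  have hgl : diagLogCoeff l g = 0 := hg.2 l hl
  have := diagLogCoeff_eq_add_sub hl hh hgh
  linarith

theorem stmt12 :
    (∃! g : PowerSeries ℚ, IsNormalized g) ∧
    ∀ g : PowerSeries ℚ, IsNormalized g →
      PowerSeries.coeff 1 g = -2 ∧ PowerSeries.coeff 2 g = 5 := by
  refine ⟨PowerSeries.existsUnique_of_triangular diagLogCoeff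
    fun l hl g h hh hgh => diagLogCoeff_eq_add_sub hl hh hgh, fun g hg => ?_⟩
  have hg0 : PowerSeries.coeff 0 g = 0 := by
    rw [PowerSeries.coeff_zero_eq_constantCoeff_apply, hg.1]
  have h1 : PowerSeries.coeff 1 g = -2 := by
    rw [hg.coeff_eq le_rfl (map_zero _) fun m hm => by simp [Nat.lt_one_iff.mp hm, hg0],
      diagLogCoeff_one_zero]
    norm_num
  refine ⟨h1, ?_⟩
  have hc0 : PowerSeries.constantCoeff (PowerSeries.monomial 1 (-2 : ℚ)) = 0 := by
    rw [← PowerSeries.coeff_zero_eq_constantCoeff_apply, PowerSeries.coeff_monomial,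
      if_neg zero_ne_one]
  rw [hg.coeff_eq one_le_two hc0 fun m hm => by
      interval_cases m <;> rw [PowerSeries.coeff_monomial] <;> simp [hg0, h1],
    diagLogCoeff_two_monomial, PowerSeries.coeff_monomial, if_neg (by norm_num)]
  norm_num
end
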